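/- arXiv:1701.09087 — 2 statements merged into one kernel-verified Lean document; each statement's English description precedes it below -/
import Mathlib

section
/- Let S be the target set for the Cantor game on [a₀, b₀], where a₀ < b₀. If S is a Bernstein set in [a₀, b₀], then neither player A nor player B has a winning strategy. -/
open Filter Set

/-- Data generating a generalized Cantor set: closed intervals
`I_{i₁,…,iₙ} = [c l, d l]` indexed by nonempty finite binary sequences
(`l : List Bool`, with the last entry the most recently added index),
inside a closed interval `[lo, hi]`, with diameters controlled by a strictly
decreasing positive sequence `e` tending to `0`. -/
structure GenCantor where
  lo : ℝ
  hi : ℝ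
  lo_lt_hi : lo < hi
  e : ℕ → ℝ
  e_pos : ∀ n : ℕ, 0 < e n
  e_anti : StrictAnti e
  e_lim : Filter.Tendsto e Filter.atTop (nhds 0)
  c : List Bool → ℝ
  d : List Bool → ℝ
  diam_pos : ∀ l : List Bool, l ≠ [] → 0 < d l - c l
  diam_lt : ∀ l : List Bool, l ≠ [] → d l - c l < e l.length
  root_sub : ∀ i : Bool, Set.Icc (c [i]) (d [i]) ⊆ Set.Icc lo hi
  nested : ∀ l : List Bool, l ≠ [] → ∀ i : Bool,
    Set.Icc (c (l ++ [i])) (d (l ++ [i])) ⊆ Set.Icc (c l) (d l)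
  disj : ∀ l : List Bool,
    Set.Icc (c (l ++ [false])) (d (l ++ [false])) ∩
      Set.Icc (c (l ++ [true])) (d (l ++ [true])) = ∅

/-- The generalized Cantor set generated by the data `G`:
`C = ⋂_{n ≥ 1} ⋃_{i₁,…,iₙ} I_{i₁,…,iₙ}`. -/
def GenCantor.C (G : GenCantor) : Set ℝ :=
  ⋂ n : ℕ, ⋃ l ∈ {l : List Bool | l.length = n + 1}, Set.Icc (G.c l) (G.d l)

/-- A set of reals is a generalized Cantor set if it is generated by some data. -/
def IsGenCantorSet (C : Set ℝ) : Prop := ∃ G : GenCantor, G.C = C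

/-- The length-`(n+1)` initial segment `[s 0, …, s n]` of a binary sequence. -/
def prefixSeq (s : ℕ → Bool) (n : ℕ) : List Bool := List.ofFn fun i : Fin (n + 1) => s i

/-- A set `P ⊆ ℝ` is perfect if it is closed and each of its points is a
limit point of `P`. -/
def PerfectSet (P : Set ℝ) : Prop := IsClosed P ∧ ∀ x ∈ P, x ∈ closure (P \ {x})

/-- A valid history for player A before A's move number `n+1`:
moves `a 0 = a₀ < a 1 < ⋯ < a n < b n < ⋯ < b 1 < b 0 = b₀`. -/
def ValidHistA (a₀ b₀ : ℝ) {n : ℕ} (a b : Fin (n + 1) → ℝ) : Prop :=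
  a 0 = a₀ ∧ b 0 = b₀ ∧ StrictMono a ∧ StrictAnti b ∧ a (Fin.last n) < b (Fin.last n)

/-- A strategy for player A in the Cantor game on `[a₀, b₀]`:
functions `f n` producing the move `a (n+1)` from the history
`(a 0, b 0, …, a n, b n)`, with `a n < f n a b < b n` on valid histories. -/
structure StratA (a₀ b₀ : ℝ) where
  f : (n : ℕ) → (Fin (n + 1) → ℝ) → (Fin (n + 1) → ℝ) → ℝ
  valid : ∀ (n : ℕ) (a b : Fin (n + 1) → ℝ), ValidHistA a₀ b₀ a b →
    a (Fin.last n) < f n a b ∧ f n a b < b (Fin.last n)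

/-- A valid history for player B before B's move number `n+1`:
`a 0 = a₀ < a 1 < ⋯ < a (n+1) < b n < ⋯ < b 1 < b 0 = b₀`. -/
def ValidHistB (a₀ b₀ : ℝ) {n : ℕ} (a : Fin (n + 2) → ℝ) (b : Fin (n + 1) → ℝ) : Prop :=
  a 0 = a₀ ∧ b 0 = b₀ ∧ StrictMono a ∧ StrictAnti b ∧ a (Fin.last (n + 1)) < b (Fin.last n)

/-- A strategy for player B in the Cantor game on `[a₀, b₀]`:
functions `g n` producing the move `b (n+1)` from the history
`(a 0, b 0, …, a n, b n, a (n+1))`, with `a (n+1) < g n a b < b n` on valid histories. -/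
structure StratB (a₀ b₀ : ℝ) where
  g : (n : ℕ) → (Fin (n + 2) → ℝ) → (Fin (n + 1) → ℝ) → ℝ
  valid : ∀ (n : ℕ) (a : Fin (n + 2) → ℝ) (b : Fin (n + 1) → ℝ), ValidHistB a₀ b₀ a b →
    a (Fin.last (n + 1)) < g n a b ∧ g n a b < b (Fin.last n)

/-- A play of the Cantor game on `[a₀, b₀]`:
`a (n-1) < a n < b n < b (n-1)` for all `n ≥ 1`. -/
def IsPlay (a₀ b₀ : ℝ) (a b : ℕ → ℝ) : Prop :=
  a 0 = a₀ ∧ b 0 = b₀ ∧ ∀ n : ℕ, a n < a (n + 1) ∧ a (n + 1) < b (n + 1) ∧ b (n + 1) < b n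

/-- A play is consistent with a strategy for A if each of A's moves is given by
the strategy applied to the preceding history. -/
def ConsistentA {a₀ b₀ : ℝ} (σ : StratA a₀ b₀) (a b : ℕ → ℝ) : Prop :=
  ∀ n : ℕ, a (n + 1) = σ.f n (fun i : Fin (n + 1) => a i) (fun i : Fin (n + 1) => b i)

/-- A play is consistent with a strategy for B if each of B's moves is given by
the strategy applied to the preceding history. -/
def ConsistentB {a₀ b₀ : ℝ} (σ : StratB a₀ b₀) (a b : ℕ → ℝ) : Prop :=
  ∀ n : ℕ, b (n + 1) = σ.g n (fun i : Fin (n + 2) => a i) (fun i : Fin (n + 1) => b i)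

/-- The limit set of a strategy for player A: all limits `lim aₙ` over plays
consistent with the strategy. -/
def limitSetA {a₀ b₀ : ℝ} (σ : StratA a₀ b₀) : Set ℝ :=
  {x | ∃ a b : ℕ → ℝ, IsPlay a₀ b₀ a b ∧ ConsistentA σ a b ∧
    Filter.Tendsto a Filter.atTop (nhds x)}

/-- The limit set of a strategy for player B: all limits `lim aₙ` over plays
consistent with the strategy. -/
def limitSetB {a₀ b₀ : ℝ} (σ : StratB a₀ b₀) : Set ℝ :=
  {x | ∃ a b : ℕ → ℝ, IsPlay a₀ b₀ a b ∧ ConsistentB σ a b ∧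
    Filter.Tendsto a Filter.atTop (nhds x)}

/-- A strategy for A is winning for target set `S` iff its limit set lies in `S`. -/
def WinningA {a₀ b₀ : ℝ} (σ : StratA a₀ b₀) (S : Set ℝ) : Prop := limitSetA σ ⊆ S

/-- A strategy for B is winning for target set `S` iff its limit set lies in
`[a₀, b₀] − S`. -/
def WinningB {a₀ b₀ : ℝ} (σ : StratB a₀ b₀) (S : Set ℝ) : Prop :=
  limitSetB σ ⊆ Set.Icc a₀ b₀ \ S

/-- `B` is a Bernstein set in `X ⊆ ℝ` (with its subspace topology) if `B ⊆ X` and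
neither `B` nor `X − B` contains a set that is uncountable and closed in `X`. -/
def IsBernsteinIn (X B : Set ℝ) : Prop :=
  B ⊆ X ∧
    (¬ ∃ T : Set ℝ, T ⊆ B ∧ ¬ T.Countable ∧ IsClosed (Subtype.val ⁻¹' T : Set X)) ∧
    (¬ ∃ T : Set ℝ, T ⊆ X \ B ∧ ¬ T.Countable ∧ IsClosed (Subtype.val ⁻¹' T : Set X))

/-- The set of right condensation points of `S` in `[a₀, b₀]`. -/
def rightCondPts (a₀ b₀ : ℝ) (S : Set ℝ) : Set ℝ :=
  {x ∈ Set.Icc a₀ b₀ | ∀ ε > 0, ¬ (Set.Ioo x (x + ε) ∩ S).Countable}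
/-!
Against a fixed strategy of either player, the opponent can branch at every round into two
replies whose later moves lie in disjoint intervals, while the gap between A's last move and an
upper bound for all later moves of A at least halves from round to round. Indexing the branches by
`s : ℕ → Bool` gives plays consistent with the strategy whose limits depend continuously and
injectively on `s`, so the limit set of the strategy contains a compact uncountable set. For a
winning strategy this set lies in `S` (for A) or in `[a₀, b₀] − S` (for B), which a Bernstein set
forbids.
-/

open Function Topology

instance : Uncountable (ℕ → Bool) := by
  rw [← not_countable_iff, ← Cardinal.mk_le_aleph0_iff, not_le]
  simpa using Cardinal.aleph0_lt_continuum

theorem IsBernsteinIn.not_range_subset {X B : Set ℝ} (hB : IsBernsteinIn X B)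
    {x : (ℕ → Bool) → ℝ} (hx : Continuous x) (hinj : Injective x) :
    ¬ range x ⊆ B ∧ ¬ range x ⊆ X \ B := by
  have hcount : ¬ (range x).Countable := by
    rw [← countable_coe_iff, (Equiv.ofInjective x hinj).symm.countable_iff]
    exact not_countable
  have hclosed : IsClosed (Subtype.val ⁻¹' range x : Set X) :=
    (isCompact_range hx).isClosed.preimage continuous_subtype_val
  exact ⟨fun h => hB.2.1 ⟨_, h, hcount, hclosed⟩, fun h => hB.2.2 ⟨_, h, hcount, hclosed⟩⟩

theorem DependsOn.isLocallyConstant {ι β : Type*} {α : ι → Type*} [∀ i, TopologicalSpace (α i)]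
    [∀ i, DiscreteTopology (α i)] {f : (Π i, α i) → β} {s : Set ι} (hf : DependsOn f s)
    (hs : s.Finite) : IsLocallyConstant f := by
  refine (IsLocallyConstant.iff_exists_open f).2 fun x => ⟨s.pi fun i => {x i}, ?_, ?_, ?_⟩
  · exact isOpen_set_pi hs fun i _ => isOpen_discrete _
  · simp
  · exact fun y hy => hf fun i hi => hy i hi

theorem exists_continuous_injective_of_cantorScheme {A U : (ℕ → Bool) → ℕ → ℝ} {ε : ℕ → ℝ}
    (hε : Tendsto ε atTop (𝓝 0)) (hA : ∀ s, Monotone (A s)) (hAU : ∀ s m n, A s m ≤ U s n)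
    (hdiam : ∀ s n, U s n - A s n ≤ ε n) (hdep : ∀ n, DependsOn (A · n) (Iio n))
    (hsep : ∀ s t n, (∀ i < n, s i = t i) → s n = false → t n = true →
      U s (n + 1) < A t (n + 2)) :
    ∃ x : (ℕ → Bool) → ℝ, Continuous x ∧ Injective x ∧ ∀ s, Tendsto (A s) atTop (𝓝 (x s)) := by
  have hbdd : ∀ s, BddAbove (range (A s)) := fun s =>
    ⟨U s 0, forall_mem_range.2 fun m => hAU s m 0⟩
  set x : (ℕ → Bool) → ℝ := fun s => ⨆ n, A s n
  have hAx : ∀ s n, A s n ≤ x s := fun s n => le_ciSup (hbdd s) n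
  have hxU : ∀ s n, x s ≤ U s n := fun s n => ciSup_le fun m => hAU s m n
  have hlt : ∀ s t n, (∀ i < n, s i = t i) → s n = false → t n = true → x s < x t :=
    fun s t n hst hs ht => (hxU s (n + 1)).trans_lt ((hsep s t n hst hs ht).trans_le (hAx t _))
  refine ⟨x, ?_, ?_, fun s => tendsto_atTop_ciSup (hA s) (hbdd s)⟩
  · have hunif : TendstoUniformly (fun n s => A s n) x atTop := by
      refine Metric.tendstoUniformly_iff.2 fun δ hδ => ?_
      filter_upwards [hε.eventually (gt_mem_nhds hδ)] with n hn s
      rw [Real.dist_eq, abs_of_nonneg (sub_nonneg.2 (hAx s n))]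
      linarith [hxU s n, hdiam s n]
    exact hunif.continuous <| Frequently.of_forall fun n =>
      ((hdep n).isLocallyConstant (finite_Iio n)).continuous
  · intro s t hst
    by_contra hne
    have hdiff : ∃ n, s n ≠ t n := Function.ne_iff.1 hne
    have hagree : ∀ i < Nat.find hdiff, s i = t i := fun i hi =>
      not_not.1 (Nat.find_min hdiff hi)
    have hfirst := Nat.find_spec hdiff
    cases hs : s (Nat.find hdiff) <;> cases ht : t (Nat.find hdiff)
    · exact hfirst (hs.trans ht.symm)
    · exact (hlt s t _ hagree hs ht).ne hst
    · exact (hlt t s _ (fun i hi => (hagree i hi).symm) ht hs).ne' hst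
    · exact hfirst (hs.trans ht.symm)

theorem Fin.strictMono_snoc {α : Type*} [Preorder α] {n : ℕ} {f : Fin (n + 1) → α} {x : α}
    (hf : StrictMono f) (hx : f (Fin.last n) < x) :
    StrictMono (Fin.snoc f x : Fin (n + 2) → α) := by
  rw [Fin.strictMono_iff_lt_succ]
  intro i
  induction i using Fin.lastCases with
  | last => simpa using hx
  | cast j =>
    rw [Fin.succ_castSucc, Fin.snoc_castSucc, Fin.snoc_castSucc]
    exact hf Fin.castSucc_lt_succ

theorem Fin.strictAnti_snoc {α : Type*} [Preorder α] {n : ℕ} {f : Fin (n + 1) → α} {x : α}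
    (hf : StrictAnti f) (hx : x < f (Fin.last n)) :
    StrictAnti (Fin.snoc f x : Fin (n + 2) → α) :=
  Fin.strictMono_snoc (α := αᵒᵈ) hf hx

/-- A history `(a 0, b 0, …, a n, b n)` of the Cantor game together with a bound `cap` below which
all later moves of A are kept. -/
structure CappedHist (n : ℕ) where
  a : Fin (n + 1) → ℝ
  b : Fin (n + 1) → ℝ
  cap : ℝ

structure GameRound where
  a : ℝ
  b : ℝ
  cap : ℝ

namespace CappedHist

variable {n : ℕ}

def push (h : CappedHist n) (r : GameRound) : CappedHist (n + 1) :=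
  ⟨Fin.snoc h.a r.a, Fin.snoc h.b r.b, r.cap⟩

structure Valid (a₀ b₀ : ℝ) (h : CappedHist n) : Prop where
  hist : ValidHistA a₀ b₀ h.a h.b
  last_lt_cap : h.a (Fin.last n) < h.cap
  cap_le : h.cap ≤ h.b (Fin.last n)

structure AdmitsRound (h : CappedHist n) (r : GameRound) : Prop where
  last_lt : h.a (Fin.last n) < r.a
  lt_cap : r.a < r.cap
  cap_le_b : r.cap ≤ r.b
  b_lt : r.b < h.b (Fin.last n)
  cap_le_cap : r.cap ≤ h.cap
  gap_le : r.cap - r.a ≤ (h.cap - h.a (Fin.last n)) / 2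

theorem validHistA_push {a₀ b₀ : ℝ} {h : CappedHist n} (hh : ValidHistA a₀ b₀ h.a h.b)
    {r : GameRound} (ha : h.a (Fin.last n) < r.a) (hab : r.a < r.b)
    (hb : r.b < h.b (Fin.last n)) : ValidHistA a₀ b₀ (h.push r).a (h.push r).b := by
  obtain ⟨ha₀, hb₀, hmono, hanti, -⟩ := hh
  refine ⟨?_, ?_, Fin.strictMono_snoc hmono ha, Fin.strictAnti_snoc hanti hb, ?_⟩ <;>
    simpa [push]

theorem Valid.push {a₀ b₀ : ℝ} {h : CappedHist n} (hh : h.Valid a₀ b₀) {r : GameRound}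
    (hr : h.AdmitsRound r) : (h.push r).Valid a₀ b₀ where
  hist := validHistA_push hh.hist hr.last_lt (hr.lt_cap.trans_le hr.cap_le_b) hr.b_lt
  last_lt_cap := by simpa [CappedHist.push] using hr.lt_cap
  cap_le := by simpa [CappedHist.push] using hr.cap_le_b

end CappedHist

/-- A binary tree of plays of the Cantor game on `[a₀, b₀]`: a branch `s : ℕ → Bool` plays the
round `next n (s n)` after the history it has produced so far. -/
structure PlayTree where
  a₀ : ℝ
  b₀ : ℝ
  next : (n : ℕ) → Bool → CappedHist n → GameRound

namespace PlayTree

variable (P : PlayTree)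

def hist (s : ℕ → Bool) : (n : ℕ) → CappedHist n
  | 0 => ⟨fun _ => P.a₀, fun _ => P.b₀, P.b₀⟩
  | n + 1 => (hist s n).push (P.next n (s n) (hist s n))

def aSeq (s : ℕ → Bool) (n : ℕ) : ℝ := (P.hist s n).a (Fin.last n)

def bSeq (s : ℕ → Bool) (n : ℕ) : ℝ := (P.hist s n).b (Fin.last n)

def capSeq (s : ℕ → Bool) (n : ℕ) : ℝ := (P.hist s n).cap

structure Admissible : Prop where
  start : P.a₀ < P.b₀
  admitsRound : ∀ s n, (P.hist s n).Valid P.a₀ P.b₀ →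
    (P.hist s n).AdmitsRound (P.next n (s n) (P.hist s n))

theorem hist_succ (s : ℕ → Bool) (n : ℕ) :
    P.hist s (n + 1) = (P.hist s n).push (P.next n (s n) (P.hist s n)) :=
  rfl

theorem dependsOn_hist (n : ℕ) : DependsOn (P.hist · n) (Iio n) := by
  induction n with
  | zero => exact fun _ _ _ => rfl
  | succ n ih =>
    intro s t hst
    have hprefix : P.hist s n = P.hist t n := ih fun i hi => hst i (Nat.lt_succ_of_lt hi)
    show P.hist s (n + 1) = P.hist t (n + 1)
    rw [hist_succ, hist_succ, hprefix, hst n (Nat.lt_succ_self n)]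

theorem hist_a (s : ℕ → Bool) (n : ℕ) :
    (P.hist s n).a = fun i : Fin (n + 1) => P.aSeq s i := by
  induction n with
  | zero => funext i; rw [Fin.fin_one_eq_zero i]; rfl
  | succ n ih =>
    funext i
    induction i using Fin.lastCases with
    | last => rfl
    | cast j => simp [hist, CappedHist.push, ih]

theorem hist_b (s : ℕ → Bool) (n : ℕ) :
    (P.hist s n).b = fun i : Fin (n + 1) => P.bSeq s i := by
  induction n with
  | zero => funext i; rw [Fin.fin_one_eq_zero i]; rfl
  | succ n ih =>
    funext i
    induction i using Fin.lastCases with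
    | last => rfl
    | cast j => simp [hist, CappedHist.push, ih]

theorem aSeq_succ (s : ℕ → Bool) (n : ℕ) :
    P.aSeq s (n + 1) = (P.next n (s n) (P.hist s n)).a := by
  simp [aSeq, hist, CappedHist.push]

theorem bSeq_succ (s : ℕ → Bool) (n : ℕ) :
    P.bSeq s (n + 1) = (P.next n (s n) (P.hist s n)).b := by
  simp [bSeq, hist, CappedHist.push]

theorem capSeq_succ (s : ℕ → Bool) (n : ℕ) :
    P.capSeq s (n + 1) = (P.next n (s n) (P.hist s n)).cap :=
  rfl

def Separated : Prop :=
  ∀ s t n, (∀ i < n, s i = t i) → s n = false → t n = true →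
    P.capSeq s (n + 1) < P.aSeq t (n + 2)

variable {P}

theorem Admissible.valid (hP : P.Admissible) (s : ℕ → Bool) (n : ℕ) :
    (P.hist s n).Valid P.a₀ P.b₀ := by
  induction n with
  | zero => exact ⟨⟨rfl, rfl, Subsingleton.strictMono (α := Fin 1) _,
      Subsingleton.strictAnti (α := Fin 1) _, hP.start⟩, hP.start, le_rfl⟩
  | succ n ih => exact ih.push (hP.admitsRound s n ih)

theorem Admissible.admitsRound_hist (hP : P.Admissible) (s : ℕ → Bool) (n : ℕ) :
    (P.hist s n).AdmitsRound (P.next n (s n) (P.hist s n)) :=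
  hP.admitsRound s n (hP.valid s n)

theorem Admissible.aSeq_lt_succ (hP : P.Admissible) (s : ℕ → Bool) (n : ℕ) :
    P.aSeq s n < P.aSeq s (n + 1) := by
  rw [aSeq_succ]
  exact (hP.admitsRound_hist s n).last_lt

theorem Admissible.aSeq_le_capSeq (hP : P.Admissible) (s : ℕ → Bool) (m n : ℕ) :
    P.aSeq s m ≤ P.capSeq s n := by
  have hmono : Monotone (P.aSeq s) := monotone_nat_of_le_succ fun n => (hP.aSeq_lt_succ s n).le
  have hanti : Antitone (P.capSeq s) :=
    antitone_nat_of_succ_le fun n => (hP.admitsRound_hist s n).cap_le_cap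
  calc P.aSeq s m ≤ P.aSeq s (max m n) := hmono (le_max_left m n)
    _ ≤ P.capSeq s (max m n) := (hP.valid s _).last_lt_cap.le
    _ ≤ P.capSeq s n := hanti (le_max_right m n)

theorem Admissible.capSeq_sub_aSeq_le (hP : P.Admissible) (s : ℕ → Bool) (n : ℕ) :
    P.capSeq s n - P.aSeq s n ≤ (P.b₀ - P.a₀) * (1 / 2) ^ n := by
  induction n with
  | zero => simp [capSeq, aSeq, hist]
  | succ n ih =>
    rw [capSeq_succ, aSeq_succ, pow_succ]
    calc _ ≤ (P.capSeq s n - P.aSeq s n) / 2 := (hP.admitsRound_hist s n).gap_le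
      _ ≤ _ := by linarith

theorem Admissible.isPlay (hP : P.Admissible) (s : ℕ → Bool) :
    IsPlay P.a₀ P.b₀ (P.aSeq s) (P.bSeq s) := by
  refine ⟨rfl, rfl, fun n => ?_⟩
  have hround := hP.admitsRound_hist s n
  rw [aSeq_succ, bSeq_succ]
  exact ⟨hround.last_lt, hround.lt_cap.trans_le hround.cap_le_b, hround.b_lt⟩

theorem Admissible.exists_continuous_injective (hP : P.Admissible) (hsep : P.Separated) :
    ∃ x : (ℕ → Bool) → ℝ, Continuous x ∧ Injective x ∧
      ∀ s, Tendsto (P.aSeq s) atTop (𝓝 (x s)) := by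
  refine exists_continuous_injective_of_cantorScheme ?_
    (fun s => monotone_nat_of_le_succ fun n => (hP.aSeq_lt_succ s n).le) hP.aSeq_le_capSeq
    hP.capSeq_sub_aSeq_le (fun n s t hst => by simp only [aSeq, P.dependsOn_hist n hst]) hsep
  simpa using (tendsto_pow_atTop_nhds_zero_of_lt_one (by norm_num)
    (by norm_num : (1 / 2 : ℝ) < 1)).const_mul (P.b₀ - P.a₀)

end PlayTree

namespace StratA

variable {a₀ b₀ : ℝ} (σ : StratA a₀ b₀) {n : ℕ}

noncomputable def move (h : CappedHist n) : ℝ := σ.f n h.a h.b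

noncomputable def replyTrue (h : CappedHist n) : ℝ := (σ.move h + h.cap) / 2

noncomputable def answerTrue (h : CappedHist n) : ℝ :=
  σ.f (n + 1) (Fin.snoc h.a (σ.move h)) (Fin.snoc h.b (σ.replyTrue h))

/-- B's reply on the `false` branch lies below A's answer on the `true` branch, which separates
the two branches. -/
noncomputable def reply (h : CappedHist n) : Bool → ℝ
  | true => σ.replyTrue h
  | false => (σ.move h + σ.answerTrue h) / 2

noncomputable def tree : PlayTree :=
  ⟨a₀, b₀, fun _ i h => ⟨σ.move h, σ.reply h i, σ.reply h i⟩⟩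

theorem tree_cap_eq (s : ℕ → Bool) :
    ∀ n, (σ.tree.hist s n).cap = (σ.tree.hist s n).b (Fin.last n)
  | 0 => rfl
  | n + 1 => by simp [PlayTree.hist, CappedHist.push, tree]

theorem admitsRound {h : CappedHist n} (hh : h.Valid a₀ b₀) (hcap : h.cap = h.b (Fin.last n))
    (i : Bool) : h.AdmitsRound ⟨σ.move h, σ.reply h i, σ.reply h i⟩ := by
  obtain ⟨hmove₁, hmove₂⟩ : h.a (Fin.last n) < σ.move h ∧ σ.move h < h.b (Fin.last n) :=
    σ.valid n h.a h.b hh.hist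
  rw [← hcap] at hmove₂
  have hreply₁ : σ.move h < σ.replyTrue h := by unfold replyTrue; linarith
  have hreply₂ : σ.replyTrue h < h.cap := by unfold replyTrue; linarith
  obtain ⟨hanswer₁, hanswer₂⟩ : σ.move h < σ.answerTrue h ∧ σ.answerTrue h < σ.replyTrue h := by
    simpa [CappedHist.push, answerTrue] using σ.valid (n + 1) _ _ <|
      CappedHist.validHistA_push (r := ⟨σ.move h, σ.replyTrue h, 0⟩) hh.hist hmove₁ hreply₁
        (hcap ▸ hreply₂)
  refine ⟨hmove₁, ?_, le_rfl, ?_, ?_, ?_⟩ <;> cases i <;> simp only [reply, replyTrue] at * <;>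
    linarith

theorem admissible (hab : a₀ < b₀) : σ.tree.Admissible :=
  ⟨hab, fun s n hh => σ.admitsRound hh (σ.tree_cap_eq s n) (s n)⟩

theorem tree_separated (hab : a₀ < b₀) : σ.tree.Separated := by
  intro s t n hst hs ht
  have hprefix : σ.tree.hist s n = σ.tree.hist t n := σ.tree.dependsOn_hist n hst
  have hanswer : σ.tree.aSeq t (n + 2) = σ.answerTrue (σ.tree.hist t n) := by
    rw [PlayTree.aSeq_succ, PlayTree.hist_succ, ht]
    rfl
  have hmove : σ.tree.aSeq t (n + 1) = σ.move (σ.tree.hist t n) := σ.tree.aSeq_succ t n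
  have hlt := (σ.admissible hab).aSeq_lt_succ t (n + 1)
  rw [hanswer, hmove] at hlt
  rw [PlayTree.capSeq_succ, hprefix, hs, hanswer]
  change (σ.move _ + σ.answerTrue _) / 2 < σ.answerTrue _
  linarith

theorem consistentA_tree (s : ℕ → Bool) : ConsistentA σ (σ.tree.aSeq s) (σ.tree.bSeq s) := by
  intro n
  rw [PlayTree.aSeq_succ, ← σ.tree.hist_a, ← σ.tree.hist_b]
  rfl

theorem exists_continuous_injective_subset_limitSetA (hab : a₀ < b₀) :
    ∃ x : (ℕ → Bool) → ℝ, Continuous x ∧ Injective x ∧ range x ⊆ limitSetA σ := by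
  obtain ⟨x, hx, hinj, hlim⟩ :=
    (σ.admissible hab).exists_continuous_injective (σ.tree_separated hab)
  exact ⟨x, hx, hinj, forall_mem_range.2 fun s =>
    ⟨_, _, (σ.admissible hab).isPlay s, σ.consistentA_tree s, hlim s⟩⟩

end StratA

namespace StratB

variable {a₀ b₀ : ℝ} (σ : StratB a₀ b₀) {n : ℕ}

/-- A's two candidate moves: the `true` one halves the gap to the cap, the `false` one
halves the gap to the `true` one, which then caps the `false` branch. -/
noncomputable def probe (h : CappedHist n) : Bool → ℝ
  | true => (h.a (Fin.last n) + h.cap) / 2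
  | false => (3 * h.a (Fin.last n) + h.cap) / 4

noncomputable def ceiling (h : CappedHist n) : Bool → ℝ
  | true => h.cap
  | false => probe h true

noncomputable def reply (h : CappedHist n) (i : Bool) : ℝ :=
  σ.g n (Fin.snoc h.a (probe h i)) h.b

noncomputable def tree : PlayTree :=
  ⟨a₀, b₀, fun _ i h => ⟨probe h i, σ.reply h i, min (ceiling h i) (σ.reply h i)⟩⟩

theorem admitsRound {h : CappedHist n} (hh : h.Valid a₀ b₀) (i : Bool) :
    h.AdmitsRound ⟨probe h i, σ.reply h i, min (ceiling h i) (σ.reply h i)⟩ := by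
  have hlast := hh.last_lt_cap
  have hprobe₁ : h.a (Fin.last n) < probe h i := by cases i <;> simp only [probe] <;> linarith
  have hprobe₂ : probe h i < ceiling h i := by
    cases i <;> simp only [probe, ceiling] <;> linarith
  have hceiling₁ : ceiling h i ≤ h.cap := by cases i <;> simp only [probe, ceiling] <;> linarith
  have hceiling₂ : ceiling h i - probe h i ≤ (h.cap - h.a (Fin.last n)) / 2 := by
    cases i <;> simp only [probe, ceiling] <;> linarith
  obtain ⟨hreply₁, hreply₂⟩ : probe h i < σ.reply h i ∧ σ.reply h i < h.b (Fin.last n) := by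
    obtain ⟨ha₀, hb₀, hmono, hanti, -⟩ := hh.hist
    have hvalid : ValidHistB a₀ b₀ (Fin.snoc h.a (probe h i)) h.b := by
      refine ⟨by simpa using ha₀, hb₀, Fin.strictMono_snoc hmono hprobe₁, hanti, ?_⟩
      simpa using (hprobe₂.trans_le hceiling₁).trans_le hh.cap_le
    simpa [reply] using σ.valid n _ _ hvalid
  refine ⟨hprobe₁, lt_min hprobe₂ hreply₁, min_le_right _ _, hreply₂,
    (min_le_left _ _).trans hceiling₁, ?_⟩
  linarith [min_le_left (ceiling h i) (σ.reply h i)]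

theorem admissible (hab : a₀ < b₀) : σ.tree.Admissible :=
  ⟨hab, fun _ _ hh => σ.admitsRound hh _⟩

theorem tree_separated (hab : a₀ < b₀) : σ.tree.Separated := by
  intro s t n hst hs ht
  have hprefix : σ.tree.hist s n = σ.tree.hist t n := σ.tree.dependsOn_hist n hst
  refine lt_of_le_of_lt ?_ ((σ.admissible hab).aSeq_lt_succ t (n + 1))
  rw [PlayTree.capSeq_succ, PlayTree.aSeq_succ, hprefix, hs, ht]
  exact min_le_left _ _

theorem consistentB_tree (s : ℕ → Bool) : ConsistentB σ (σ.tree.aSeq s) (σ.tree.bSeq s) := by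
  intro n
  rw [PlayTree.bSeq_succ, ← σ.tree.hist_a, ← σ.tree.hist_b, PlayTree.hist_succ]
  rfl

theorem exists_continuous_injective_subset_limitSetB (hab : a₀ < b₀) :
    ∃ x : (ℕ → Bool) → ℝ, Continuous x ∧ Injective x ∧ range x ⊆ limitSetB σ := by
  obtain ⟨x, hx, hinj, hlim⟩ :=
    (σ.admissible hab).exists_continuous_injective (σ.tree_separated hab)
  exact ⟨x, hx, hinj, forall_mem_range.2 fun s =>
    ⟨_, _, (σ.admissible hab).isPlay s, σ.consistentB_tree s, hlim s⟩⟩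

end StratB

/-- If the target set is a Bernstein set in `[a₀, b₀]`, then neither
player has a winning strategy. -/
theorem stmt15 (a₀ b₀ : ℝ) (hab : a₀ < b₀) (S : Set ℝ)
    (hS : IsBernsteinIn (Set.Icc a₀ b₀) S) :
    (¬ ∃ σ : StratA a₀ b₀, WinningA σ S) ∧ (¬ ∃ σ : StratB a₀ b₀, WinningB σ S) := by
  constructor
  · rintro ⟨σ, hσ⟩
    obtain ⟨x, hx, hinj, hrange⟩ := σ.exists_continuous_injective_subset_limitSetA hab
    exact (hS.not_range_subset hx hinj).1 (hrange.trans hσ)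
  · rintro ⟨σ, hσ⟩
    obtain ⟨x, hx, hinj, hrange⟩ := σ.exists_continuous_injective_subset_limitSetB hab
    exact (hS.not_range_subset hx hinj).2 (hrange.trans hσ)
end

section
/- In the Cantor game on [0, 1] with target set S = (ℝ − ℚ) ∩ [0, 1] (the set of irrational numbers in [0, 1]), player A has a winning strategy. -/
open Filter Set

/-- In the Cantor game on `[0, 1]` with the irrationals in `[0, 1]`
as target set, player A has a winning strategy. -/
theorem stmt16 :
    ∃ σ : StratA (0 : ℝ) 1, WinningA σ ({x : ℝ | Irrational x} ∩ Set.Icc 0 1) := by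
  obtain ⟨q, hq⟩ := exists_surjective_nat ℚ
  refine ⟨⟨fun n a b =>
    if (a (Fin.last n) < (q n : ℝ) ∧ (q n : ℝ) < b (Fin.last n)) then (q n : ℝ)
    else (a (Fin.last n) + b (Fin.last n)) / 2, ?_⟩, ?_⟩
  · intro n a b hv
    have hab : a (Fin.last n) < b (Fin.last n) := hv.2.2.2.2
    by_cases h : a (Fin.last n) < (q n : ℝ) ∧ (q n : ℝ) < b (Fin.last n)
    · simp only [if_pos h]; exact h
    · simp only [if_neg h]
      constructor <;> linarith
  · rintro x ⟨a, b, ⟨ha0, hb0, hstep⟩, hcons, hx⟩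
    have haMono : StrictMono a := strictMono_nat_of_lt_succ fun n => (hstep n).1
    have hbAnti : StrictAnti b := strictAnti_nat_of_succ_lt fun n => (hstep n).2.2
    have hab : ∀ n, a n < b n := by
      intro n
      cases n with
      | zero => rw [ha0, hb0]; norm_num
      | succ m => exact (hstep m).2.1
    have hxge : ∀ n, a n ≤ x := haMono.monotone.ge_of_tendsto hx
    have hxle : ∀ n, x ≤ b n := by
      intro n
      refine le_of_tendsto hx (Filter.eventually_atTop.2 ⟨n, fun m hm => ?_⟩)
      exact (hab m).le.trans (hbAnti.antitone hm)
    have hxgt : ∀ n, a n < x := fun n => lt_of_lt_of_le (haMono (Nat.lt_succ_self n)) (hxge _)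
    have hxlt : ∀ n, x < b n := fun n => lt_of_le_of_lt (hxle (n + 1)) (hbAnti (Nat.lt_succ_self n))
    have hne : ∀ r : ℚ, x ≠ (r : ℝ) := by
      intro r hr
      obtain ⟨n, rfl⟩ := hq r
      have hc := hcons n
      simp only at hc
      by_cases h : a n < (q n : ℝ) ∧ (q n : ℝ) < b n
      · have : a (n + 1) = (q n : ℝ) := by
          rw [hc]; simp only [Fin.val_last, if_pos h]
        have h2 := hxgt (n + 1)
        rw [this] at h2
        exact absurd hr (ne_of_gt h2)
      · rw [not_and_or, not_lt, not_lt] at h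
        rcases h with h | h
        · exact absurd hr (ne_of_gt (lt_of_le_of_lt h (hxgt n)))
        · exact absurd hr (ne_of_lt (lt_of_lt_of_le (hxlt n) h))
    constructor
    · intro ⟨r, hr⟩; exact hne r hr.symm
    · exact ⟨le_of_lt (ha0 ▸ hxgt 0), le_of_lt (hb0 ▸ hxlt 0)⟩
end
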